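/- Let G be a finite abelian group with unitary Fourier transform f̂(χ) = |G|^{-1/2} ∑_{x∈G} f(x) conj(χ(x)). Let S ⊆ G, Σ ⊆ Ĝ, and suppose |S|·|Σ| < |G|. Then for every f : G → ℂ, ‖f‖_{ℓ²(G)} ≤ (1 − (|S||Σ|/|G|)^{1/2})^{-1} (‖f‖_{ℓ²(G∖S)} + ‖f̂‖_{ℓ²(Ĝ∖Σ)}). In particular (S,Σ) is a strong annihilating pair. -/

import Mathlib

open Finset ComplexConjugate

/-- ℓ²-norm of `f` over the finite set `T`. -/
noncomputable def l2norm {α : Type*} (T : Finset α) (f : α → ℂ) : ℝ :=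
  Real.sqrt (∑ x ∈ T, ‖f x‖ ^ 2)

/-- ℓ^p-norm (p a real exponent) of `f` over the finite set `T`. -/
noncomputable def lpnorm {α : Type*} (p : ℝ) (T : Finset α) (f : α → ℂ) : ℝ :=
  (∑ x ∈ T, ‖f x‖ ^ p) ^ (1 / p)

/-- The unitary Fourier transform on a finite abelian group:
`f̂(χ) = |G|^{-1/2} ∑_x f x * conj (χ x)`. -/
noncomputable def dft {G : Type*} [AddCommGroup G] [Fintype G]
    (f : G → ℂ) (χ : AddChar G ℂ) : ℂ :=
  (Real.sqrt (Fintype.card G) : ℂ)⁻¹ * ∑ x, f x * conj (χ x)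

/-!
Split `f = g + h` on the Fourier side, with `ĝ = f̂ · 1_Σ` and `ĥ = f̂ · 1_{Σᶜ}`. By Plancherel
`‖h‖₂ = ‖f̂‖_{ℓ²(Σᶜ)}`. For the band-limited part, the trivial restriction estimate
`‖g‖_∞ ≤ |G|^{-1/2} ‖ĝ‖₁ ≤ |G|^{-1/2} |Σ|^{1/2} ‖f‖₂` gives `‖g‖_{ℓ²(S)} ≤ c ‖f‖₂` with
`c = (|S||Σ|/|G|)^{1/2}`. Hence `‖f‖₂ ≤ ‖f‖_{ℓ²(Sᶜ)} + ‖g‖_{ℓ²(S)} + ‖h‖_{ℓ²(S)}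
≤ ‖f‖_{ℓ²(Sᶜ)} + c ‖f‖₂ + ‖f̂‖_{ℓ²(Σᶜ)}`, and `c < 1` lets us absorb the middle term.
-/

section L2Norm

variable {α : Type*}

lemma l2norm_eq_norm_toLp (T : Finset α) (f : α → ℂ) :
    l2norm T f = ‖(WithLp.toLp 2 fun x : T => f x : EuclideanSpace ℂ T)‖ := by
  rw [l2norm, EuclideanSpace.norm_eq, ← Finset.sum_coe_sort T]

lemma l2norm_add_le (T : Finset α) (f g : α → ℂ) :
    l2norm T (f + g) ≤ l2norm T f + l2norm T g := by
  simp only [l2norm_eq_norm_toLp, Pi.add_apply]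
  exact (congrArg norm (WithLp.toLp_add 2 (fun x : T => f x) fun x : T => g x)).trans_le
    (norm_add_le _ _)

lemma l2norm_mono {T U : Finset α} (hTU : T ⊆ U) (f : α → ℂ) : l2norm T f ≤ l2norm U f :=
  Real.sqrt_le_sqrt (sum_le_sum_of_subset_of_nonneg hTU fun _ _ _ => by positivity)

lemma sum_norm_le_sqrt_card_mul_l2norm (T : Finset α) (f : α → ℂ) :
    ∑ x ∈ T, ‖f x‖ ≤ √(#T : ℝ) * l2norm T f := by
  rw [l2norm, ← Real.sqrt_mul (Nat.cast_nonneg _)]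
  exact Real.le_sqrt_of_sq_le (sq_sum_le_card_mul_sum_sq (f := fun x => ‖f x‖))

lemma l2norm_le_sqrt_card_mul {T : Finset α} {f : α → ℂ} {M : ℝ} (hf : ∀ x ∈ T, ‖f x‖ ≤ M) :
    l2norm T f ≤ √(#T : ℝ) * M := by
  obtain rfl | ⟨x, hx⟩ := T.eq_empty_or_nonempty
  · simp [l2norm]
  have hM : 0 ≤ M := (norm_nonneg _).trans (hf x hx)
  rw [l2norm, ← Real.sqrt_sq hM, ← Real.sqrt_mul (Nat.cast_nonneg _), ← nsmul_eq_mul, ← sum_const]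
  exact Real.sqrt_le_sqrt (sum_le_sum fun x hx => pow_le_pow_left₀ (norm_nonneg _) (hf x hx) 2)

variable [Fintype α]

lemma l2norm_univ_indicator (T : Finset α) (f : α → ℂ) :
    l2norm univ ((T : Set α).indicator f) = l2norm T f := by
  rw [l2norm, l2norm, ← sum_indicator_subset _ (subset_univ T)]
  congr! with x
  by_cases hx : x ∈ (T : Set α) <;> simp [hx]

lemma l2norm_univ_le_add_compl [DecidableEq α] (T : Finset α) (f : α → ℂ) :
    l2norm univ f ≤ l2norm T f + l2norm Tᶜ f := by
  calc l2norm univ f = l2norm univ ((T : Set α).indicator f + (↑Tᶜ : Set α).indicator f) := by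
        rw [coe_compl, Set.indicator_self_add_compl]
    _ ≤ l2norm T f + l2norm Tᶜ f := by
        grw [l2norm_add_le, l2norm_univ_indicator, l2norm_univ_indicator]

end L2Norm

section Fourier

variable {G : Type*} [AddCommGroup G] [Fintype G]

noncomputable def idft (a : AddChar G ℂ → ℂ) (x : G) : ℂ :=
  (Real.sqrt (Fintype.card G) : ℂ)⁻¹ * ∑ χ, a χ * χ x

omit [AddCommGroup G] in
lemma inv_sqrt_card_mul_inv_sqrt_card :
    ((√(Fintype.card G) : ℝ) : ℂ)⁻¹ * ((√(Fintype.card G) : ℝ) : ℂ)⁻¹ = (Fintype.card G : ℂ)⁻¹ := by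
  rw [← mul_inv, ← Complex.ofReal_mul, Real.mul_self_sqrt (Nat.cast_nonneg _)]
  push_cast
  rfl

lemma AddChar.sum_apply_mul_conj_apply [DecidableEq G] (x y : G) :
    ∑ χ : AddChar G ℂ, χ x * conj (χ y) = if x = y then (Fintype.card G : ℂ) else 0 := by
  have h : ∀ χ : AddChar G ℂ, χ x * conj (χ y) = χ (x - y) := fun χ => by
    rw [← AddChar.map_neg_eq_conj, ← AddChar.map_add_eq_mul, sub_eq_add_neg]
  simp_rw [h, AddChar.sum_apply_eq_ite, sub_eq_zero]

lemma AddChar.sum_mul_conj_apply (χ ψ : AddChar G ℂ) :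
    ∑ x, χ x * conj (ψ x) = if χ = ψ then (Fintype.card G : ℂ) else 0 := by
  have h : ∀ x, χ x * conj (ψ x) = (χ * ψ⁻¹) x := fun x => by
    rw [AddChar.mul_apply, AddChar.inv_apply, AddChar.map_neg_eq_conj]
  simp_rw [h, AddChar.sum_eq_ite, ← AddChar.one_eq_zero, mul_inv_eq_one]

lemma idft_add (a b : AddChar G ℂ → ℂ) : idft (a + b) = idft a + idft b := by
  ext x
  simp only [idft, Pi.add_apply, add_mul, sum_add_distrib, mul_add]

lemma idft_dft (f : G → ℂ) : idft (dft f) = f := by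
  classical
  ext x
  calc idft (dft f) x
      = (Fintype.card G : ℂ)⁻¹ * ∑ y, f y * ∑ χ : AddChar G ℂ, χ x * conj (χ y) := by
        simp only [idft, dft, mul_sum, sum_mul]
        rw [sum_comm]
        refine sum_congr rfl fun y _ => sum_congr rfl fun χ _ => ?_
        rw [← inv_sqrt_card_mul_inv_sqrt_card]
        ring
    _ = f x := by
        have hG : (Fintype.card G : ℂ) ≠ 0 := Nat.cast_ne_zero.2 Fintype.card_ne_zero
        simp only [AddChar.sum_apply_mul_conj_apply, mul_ite, mul_zero, sum_ite_eq, mem_univ,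
          ↓reduceIte]
        field_simp

lemma sum_idft_mul_conj (a : AddChar G ℂ → ℂ) :
    ∑ x, idft a x * conj (idft a x) = ∑ χ, a χ * conj (a χ) := by
  calc ∑ x, idft a x * conj (idft a x)
      = (Fintype.card G : ℂ)⁻¹ * ∑ ψ, ∑ χ, a χ * conj (a ψ) * ∑ x, χ x * conj (ψ x) := by
        simp only [idft, map_mul, map_inv₀, Complex.conj_ofReal, map_sum, mul_sum, sum_mul]
        rw [sum_comm]
        refine sum_congr rfl fun ψ _ => ?_
        rw [sum_comm]
        refine sum_congr rfl fun χ _ => sum_congr rfl fun x _ => ?_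
        rw [← inv_sqrt_card_mul_inv_sqrt_card]
        ring
    _ = ∑ χ, a χ * conj (a χ) := by
        have hG : (Fintype.card G : ℂ) ≠ 0 := Nat.cast_ne_zero.2 Fintype.card_ne_zero
        simp only [AddChar.sum_mul_conj_apply, mul_ite, mul_zero, sum_ite_eq', mem_univ,
          ↓reduceIte, ← sum_mul]
        field_simp

lemma l2norm_idft (a : AddChar G ℂ → ℂ) : l2norm univ (idft a) = l2norm univ a := by
  have h := sum_idft_mul_conj a
  simp_rw [Complex.mul_conj, Complex.normSq_eq_norm_sq] at h
  rw [l2norm, l2norm]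
  exact congrArg Real.sqrt (mod_cast h)

lemma l2norm_dft (f : G → ℂ) : l2norm univ (dft f) = l2norm univ f := by
  conv_rhs => rw [← idft_dft f]
  exact (l2norm_idft _).symm

lemma norm_idft_le (a : AddChar G ℂ → ℂ) (x : G) :
    ‖idft a x‖ ≤ (√(Fintype.card G))⁻¹ * ∑ χ, ‖a χ‖ := by
  rw [idft, norm_mul, norm_inv, Complex.norm_real, Real.norm_of_nonneg (Real.sqrt_nonneg _)]
  gcongr
  refine (norm_sum_le _ _).trans_eq (sum_congr rfl fun χ _ => ?_)
  rw [norm_mul, AddChar.norm_apply, mul_one]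

lemma l2norm_idft_indicator_le (S : Finset G) (Sig : Finset (AddChar G ℂ)) (a : AddChar G ℂ → ℂ) :
    l2norm S (idft ((Sig : Set (AddChar G ℂ)).indicator a)) ≤
      √(#S * #Sig / Fintype.card G : ℝ) * l2norm Sig a := by
  have hpt : ∀ x ∈ S, ‖idft ((Sig : Set (AddChar G ℂ)).indicator a) x‖ ≤
      (√(Fintype.card G))⁻¹ * (√(#Sig : ℝ) * l2norm Sig a) := fun x _ =>
    calc ‖idft ((Sig : Set (AddChar G ℂ)).indicator a) x‖
        ≤ (√(Fintype.card G))⁻¹ * ∑ χ, ‖(Sig : Set (AddChar G ℂ)).indicator a χ‖ :=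
          norm_idft_le _ x
      _ = (√(Fintype.card G))⁻¹ * ∑ χ ∈ Sig, ‖a χ‖ := by
          simp_rw [norm_indicator_eq_indicator_norm, sum_indicator_subset _ (subset_univ Sig)]
      _ ≤ _ := by grw [sum_norm_le_sqrt_card_mul_l2norm]
  refine (l2norm_le_sqrt_card_mul hpt).trans_eq ?_
  rw [Real.sqrt_div' _ (Nat.cast_nonneg _), Real.sqrt_mul (Nat.cast_nonneg _)]
  ring

end Fourier

/-- Quantitative Matolcsi–Szücs / Donoho–Stark uncertainty principle:
if `|S| |Σ| < |G|` then `(S,Σ)` is a strong annihilating pair with constant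
`(1 - (|S||Σ|/|G|)^{1/2})⁻¹`. -/
theorem stmt1 {G : Type} [AddCommGroup G] [Fintype G] [DecidableEq G]
    (S : Finset G) (Sig : Finset (AddChar G ℂ))
    (hsmall : S.card * Sig.card < Fintype.card G) :
    ∀ f : G → ℂ,
      l2norm Finset.univ f ≤
        (1 - Real.sqrt ((S.card * Sig.card : ℝ) / (Fintype.card G : ℝ)))⁻¹ *
          (l2norm Sᶜ f + l2norm Sigᶜ (dft f)) := by
  intro f
  set c := Real.sqrt ((S.card * Sig.card : ℝ) / (Fintype.card G : ℝ))
  have hc : c < 1 := by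
    rw [Real.sqrt_lt' one_pos, one_pow, div_lt_one (by exact_mod_cast Fintype.card_pos)]
    exact_mod_cast hsmall
  set g := idft ((Sig : Set (AddChar G ℂ)).indicator (dft f))
  set h := idft ((↑Sigᶜ : Set (AddChar G ℂ)).indicator (dft f))
  have hfgh : f = g + h := by
    rw [← idft_add, coe_compl, Set.indicator_self_add_compl, idft_dft]
  have hg : l2norm S g ≤ c * l2norm univ f := by
    grw [l2norm_idft_indicator_le, l2norm_mono (subset_univ Sig), l2norm_dft]
  have hh : l2norm S h ≤ l2norm Sigᶜ (dft f) := by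
    grw [l2norm_mono (subset_univ S), l2norm_idft, l2norm_univ_indicator]
  have hS : l2norm S f ≤ l2norm S g + l2norm S h := by
    nth_rw 1 [hfgh]
    exact l2norm_add_le S g h
  have hf := l2norm_univ_le_add_compl S f
  rw [inv_mul_eq_div, le_div_iff₀ (sub_pos.2 hc)]
  linarith
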